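/- Let μ > 0, σ > 0 and x0 ≥ 0. For every real θ < 0 with θ ≠ −2μ/σ², the Laplace transform of the one-dimensional Green's function g satisfies ∫₀^∞ e^{θx} g(x) dx = −(e^{θx0} + θ·(σ²/(2μ))·e^{−(2μ/σ²)x0}) / (μθ + (1/2)σ²θ²). -/

import Mathlib

/-!
Writing `a = 2μ/σ²`, `g` equals `e^{a(x - x0)}/μ` on all of `[0, x0]` (the two branches agree
at `x0`) and `1/μ` on `(x0, ∞)`, so the Laplace transform is the sum of two elementary
exponential integrals, `(e^{θx0} - e^{-a x0}) / (μ(θ + a))` and `-e^{θx0} / (μθ)`; since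
`μθ(θ + a)/a = μθ + σ²θ²/2`, their sum is the stated closed form.
-/

open MeasureTheory

/-- The Green's function of the one-dimensional reflected Brownian motion with drift
`μ > 0` and variance `σ²`, started from `x0`. -/
noncomputable def green1D (μ σ x0 : ℝ) (x : ℝ) : ℝ :=
  if x < x0 then (1/μ) * Real.exp ((2*μ/σ^2) * (x - x0)) else 1/μ

open Set Real

theorem integral_exp_mul {c : ℝ} (hc : c ≠ 0) (a b : ℝ) :
    ∫ x in a..b, exp (c * x) = (exp (c * b) - exp (c * a)) / c := by
  rw [intervalIntegral.integral_comp_mul_left (fun x => exp x) hc, integral_exp, smul_eq_mul,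
    inv_mul_eq_div]

section green1D

variable {μ σ x0 x : ℝ}

theorem green1D_of_ge (h : x0 ≤ x) : green1D μ σ x0 x = 1 / μ :=
  if_neg h.not_gt

theorem green1D_of_le (h : x ≤ x0) : green1D μ σ x0 x = exp ((2*μ/σ^2) * (x - x0)) / μ := by
  rcases h.lt_or_eq with h | rfl
  · rw [green1D, if_pos h, one_div_mul_eq_div]
  · simp [green1D_of_ge]

theorem exp_mul_green1D_of_le (h : x ≤ x0) (θ : ℝ) :
    exp (θ * x) * green1D μ σ x0 x =
      exp (-(2*μ/σ^2) * x0) / μ * exp ((θ + 2*μ/σ^2) * x) := by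
  rw [green1D_of_le h, mul_div_assoc', div_mul_eq_mul_div (exp _), ← exp_add, ← exp_add]
  congr 2
  ring

variable (μ σ x0) {θ : ℝ}

theorem integrableOn_Ioc_exp_mul_green1D (a : ℝ) :
    IntegrableOn (fun x => exp (θ * x) * green1D μ σ x0 x) (Ioc a x0) :=
  (integrableOn_congr_fun (fun _ hx => exp_mul_green1D_of_le hx.2 θ) measurableSet_Ioc).2
    (Continuous.integrableOn_Ioc (by fun_prop))

theorem integrableOn_Ioi_exp_mul_green1D (hθ : θ < 0) :
    IntegrableOn (fun x => exp (θ * x) * green1D μ σ x0 x) (Ioi x0) :=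
  (integrableOn_congr_fun (fun _ hx => by rw [green1D_of_ge (le_of_lt hx)]) measurableSet_Ioi).2
    ((integrableOn_exp_mul_Ioi hθ x0).mul_const _)

theorem setIntegral_Ioc_exp_mul_green1D (hx0 : 0 ≤ x0) (hθ : θ + 2*μ/σ^2 ≠ 0) :
    ∫ x in Ioc 0 x0, exp (θ * x) * green1D μ σ x0 x =
      (exp (θ * x0) - exp (-(2*μ/σ^2) * x0)) / (μ * (θ + 2*μ/σ^2)) := by
  rw [setIntegral_congr_fun measurableSet_Ioc (fun _ hx => exp_mul_green1D_of_le hx.2 θ),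
    ← intervalIntegral.integral_of_le hx0, intervalIntegral.integral_const_mul,
    integral_exp_mul hθ, mul_zero, exp_zero, div_mul_div_comm, mul_sub, mul_one, ← exp_add]
  congr 3
  ring

theorem setIntegral_Ioi_exp_mul_green1D (hθ : θ < 0) :
    ∫ x in Ioi x0, exp (θ * x) * green1D μ σ x0 x = -exp (θ * x0) / (μ * θ) := by
  rw [setIntegral_congr_fun measurableSet_Ioi (fun _ hx => by rw [green1D_of_ge (le_of_lt hx)]),
    integral_mul_const, integral_exp_mul_Ioi hθ]
  ring

theorem setIntegral_Ioi_zero_exp_mul_green1D (hx0 : 0 ≤ x0) (hθ : θ < 0)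
    (hθa : θ + 2*μ/σ^2 ≠ 0) :
    ∫ x in Ioi 0, exp (θ * x) * green1D μ σ x0 x =
      (exp (θ * x0) - exp (-(2*μ/σ^2) * x0)) / (μ * (θ + 2*μ/σ^2)) - exp (θ * x0) / (μ * θ) := by
  rw [← Ioc_union_Ioi_eq_Ioi hx0, setIntegral_union (Ioc_disjoint_Ioi le_rfl) measurableSet_Ioi
    (integrableOn_Ioc_exp_mul_green1D μ σ x0 0) (integrableOn_Ioi_exp_mul_green1D μ σ x0 hθ),
    setIntegral_Ioc_exp_mul_green1D μ σ x0 hx0 hθa, setIntegral_Ioi_exp_mul_green1D μ σ x0 hθ]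
  ring

end green1D

/-- Laplace transform of the one-dimensional Green's function. -/
theorem stmt_17 (μ σ x0 : ℝ) (hμ : 0 < μ) (hσ : 0 < σ) (hx0 : 0 ≤ x0) :
    ∀ θ : ℝ, θ < 0 → θ ≠ -2*μ/σ^2 →
      ∫ x in Set.Ioi (0:ℝ), Real.exp (θ * x) * green1D μ σ x0 x =
        -(Real.exp (θ * x0) + θ * (σ^2/(2*μ)) * Real.exp (-(2*μ/σ^2) * x0))
          / (μ * θ + (1/2) * σ^2 * θ^2) := by
  intro θ hθ hθa
  have hμ0 := hμ.ne'
  have hθ0 := hθ.ne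
  have hθa' : θ + 2*μ/σ^2 ≠ 0 := by
    contrapose! hθa
    linear_combination hθa
  have hden : μ * θ + (1/2) * σ^2 * θ^2 ≠ 0 := by
    have : σ^2 * θ + 2 * μ ≠ 0 := by
      contrapose! hθa'
      field_simp
      linear_combination hθa'
    rw [show μ * θ + (1/2) * σ^2 * θ^2 = θ * (σ^2 * θ + 2 * μ) / 2 by ring]
    positivity
  rw [setIntegral_Ioi_zero_exp_mul_green1D μ σ x0 hx0 hθ hθa',
    div_sub_div _ _ (mul_ne_zero hμ0 hθa') (mul_ne_zero hμ0 hθ0),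
    div_eq_div_iff (by positivity) hden]
  field_simp
  ring
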